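/- Derivation of the second incompleteness theorem from the derivability conditions: given a sentence δ with ⊢ δ ↔ ¬Pr(⌈δ⌉), where Pr satisfies the three Hilbert–Bernays conditions, if ⊢ ¬Pr(⌈⊥⌉) then ⊢ δ; hence if the system is consistent (so ⊬ δ by the first theorem argument), then ⊬ ¬Pr(⌈⊥⌉). -/
import Mathlib


/-! Locally nameless (de Bruijn indices for bound variables, names for free
variables) syntax of the first-order language of hereditarily finite set
theory: terms built from 0, variables and the binary operation ◁ ("eats");
formulas built from atomic membership and equality, disjunction, negation
and the existential quantifier. -/

/-- Terms of the HF language. `var i` is a free (named) variable, `bvar k`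
a de Bruijn index for a bound variable. -/
inductive Tm : Type
  | zero : Tm
  | var : ℕ → Tm
  | bvar : ℕ → Tm
  | eats : Tm → Tm → Tm
  deriving DecidableEq

/-- Formulas of the HF language. `ex A` binds de Bruijn index 0 of `A`. -/
inductive Fm : Type
  | mem : Tm → Tm → Fm
  | eq : Tm → Tm → Fm
  | disj : Fm → Fm → Fm
  | neg : Fm → Fm
  | ex : Fm → Fm
  deriving DecidableEq

/-- Substitution of term `t` for the free variable `i` in a term. -/
def substTm (i : ℕ) (t : Tm) : Tm → Tm
  | Tm.zero => Tm.zero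
  | Tm.var j => if i = j then t else Tm.var j
  | Tm.bvar k => Tm.bvar k
  | Tm.eats a b => Tm.eats (substTm i t a) (substTm i t b)

/-- Capture-avoiding substitution `A(i ::= t)` of term `t` for the free
variable `i` in a formula. -/
def substFm (i : ℕ) (t : Tm) : Fm → Fm
  | Fm.mem a b => Fm.mem (substTm i t a) (substTm i t b)
  | Fm.eq a b => Fm.eq (substTm i t a) (substTm i t b)
  | Fm.disj A B => Fm.disj (substFm i t A) (substFm i t B)
  | Fm.neg A => Fm.neg (substFm i t A)
  | Fm.ex A => Fm.ex (substFm i t A)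

/-- De Bruijn abstraction on terms: replace the free variable `i` by the
bound index `k`. -/
def abstTm (i k : ℕ) : Tm → Tm
  | Tm.zero => Tm.zero
  | Tm.var j => if i = j then Tm.bvar k else Tm.var j
  | Tm.bvar m => Tm.bvar m
  | Tm.eats a b => Tm.eats (abstTm i k a) (abstTm i k b)

/-- De Bruijn abstraction `abst_dbfm i k A`: replace free occurrences of the
name `i` by the bound index `k`, adjusted under quantifiers. -/
def abstFm (i k : ℕ) : Fm → Fm
  | Fm.mem a b => Fm.mem (abstTm i k a) (abstTm i k b)
  | Fm.eq a b => Fm.eq (abstTm i k a) (abstTm i k b)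
  | Fm.disj A B => Fm.disj (abstFm i k A) (abstFm i k B)
  | Fm.neg A => Fm.neg (abstFm i k A)
  | Fm.ex A => Fm.ex (abstFm i (k + 1) A)

/-- De Bruijn substitution on terms: replace the bound index `k` by `t`. -/
def substBvarTm (t : Tm) (k : ℕ) : Tm → Tm
  | Tm.zero => Tm.zero
  | Tm.var j => Tm.var j
  | Tm.bvar m => if m = k then t else Tm.bvar m
  | Tm.eats a b => Tm.eats (substBvarTm t k a) (substBvarTm t k b)

/-- De Bruijn substitution `subst_dbfm t k A`: replace the bound index `k` by
the term `t`, adjusted under quantifiers. -/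
def substBvarFm (t : Tm) (k : ℕ) : Fm → Fm
  | Fm.mem a b => Fm.mem (substBvarTm t k a) (substBvarTm t k b)
  | Fm.eq a b => Fm.eq (substBvarTm t k a) (substBvarTm t k b)
  | Fm.disj A B => Fm.disj (substBvarFm t k A) (substBvarFm t k B)
  | Fm.neg A => Fm.neg (substBvarFm t k A)
  | Fm.ex A => Fm.ex (substBvarFm t (k + 1) A)

/-- Free variables of a term. -/
def fvTm : Tm → Finset ℕ
  | Tm.zero => ∅
  | Tm.var j => {j}
  | Tm.bvar _ => ∅
  | Tm.eats a b => fvTm a ∪ fvTm b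

/-- Free variables of a formula. -/
def fvFm : Fm → Finset ℕ
  | Fm.mem a b => fvTm a ∪ fvTm b
  | Fm.eq a b => fvTm a ∪ fvTm b
  | Fm.disj A B => fvFm A ∪ fvFm B
  | Fm.neg A => fvFm A
  | Fm.ex A => fvFm A

/-- The existential quantifier with a named variable: `∃ i. A`. -/
def FEx (i : ℕ) (A : Fm) : Fm := Fm.ex (abstFm i 0 A)

/-- Implication, defined as `¬A ∨ B`. -/
def FImp (A B : Fm) : Fm := Fm.disj (Fm.neg A) B

/-- Conjunction, defined from disjunction and negation. -/
def FAnd (A B : Fm) : Fm := Fm.neg (Fm.disj (Fm.neg A) (Fm.neg B))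

/-- Biconditional. -/
def FIff (A B : Fm) : Fm := FAnd (FImp A B) (FImp B A)

/-- The universal quantifier with a named variable. -/
def FAll (i : ℕ) (A : Fm) : Fm := Fm.neg (FEx i (Fm.neg A))

/-- Bounded universal quantifier `∀ (i ∈ t). A`. -/
def FAll2 (i : ℕ) (t : Tm) (A : Fm) : Fm := FAll i (FImp (Fm.mem (Tm.var i) t) A)

/-- A fixed refutable sentence (falsity) `⊥`. -/
def Fls : Fm := Fm.neg (Fm.eq Tm.zero Tm.zero)

/-! The Hilbert-style proof system for HF set theory. -/

/-- Boolean (propositional) axioms. -/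
inductive BoolAx : Fm → Prop
  | ident (A : Fm) : BoolAx (FImp A A)
  | disjI1 (A B : Fm) : BoolAx (FImp A (Fm.disj A B))
  | disjCont (A : Fm) : BoolAx (FImp (Fm.disj A A) A)
  | disjAssoc (A B C : Fm) :
      BoolAx (FImp (Fm.disj A (Fm.disj B C)) (Fm.disj (Fm.disj A B) C))
  | disjConj (A B C : Fm) :
      BoolAx (FImp (Fm.disj C A) (FImp (Fm.disj (Fm.neg C) B) (Fm.disj A B)))

/-- Equality axioms. -/
inductive EqAx : Fm → Prop
  | refl : EqAx (Fm.eq (Tm.var 0) (Tm.var 0))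
  | eqCong : EqAx (FImp (FAnd (Fm.eq (Tm.var 0) (Tm.var 1)) (Fm.eq (Tm.var 2) (Tm.var 3)))
      (FImp (Fm.eq (Tm.var 0) (Tm.var 2)) (Fm.eq (Tm.var 1) (Tm.var 3))))
  | memCong : EqAx (FImp (FAnd (Fm.eq (Tm.var 0) (Tm.var 1)) (Fm.eq (Tm.var 2) (Tm.var 3)))
      (FImp (Fm.mem (Tm.var 0) (Tm.var 2)) (Fm.mem (Tm.var 1) (Tm.var 3))))
  | eatsCong : EqAx (FImp (FAnd (Fm.eq (Tm.var 0) (Tm.var 1)) (Fm.eq (Tm.var 2) (Tm.var 3)))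
      (Fm.eq (Tm.eats (Tm.var 0) (Tm.var 2)) (Tm.eats (Tm.var 1) (Tm.var 3))))

/-- Specialization axioms `A(i::=t) → ∃ i. A`. -/
inductive SpecAx : Fm → Prop
  | intro (i : ℕ) (t : Tm) (A : Fm) : SpecAx (FImp (substFm i t A) (FEx i A))

/-- The HF axioms HF1 and HF2. -/
inductive HFAx : Fm → Prop
  | hf1 : HFAx (FIff (Fm.eq (Tm.var 0) Tm.zero)
      (FAll 1 (Fm.neg (Fm.mem (Tm.var 1) (Tm.var 0)))))
  | hf2 : HFAx (FIff (Fm.eq (Tm.var 0) (Tm.eats (Tm.var 1) (Tm.var 2)))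
      (FAll 3 (FIff (Fm.mem (Tm.var 3) (Tm.var 0))
        (Fm.disj (Fm.mem (Tm.var 3) (Tm.var 1)) (Fm.eq (Tm.var 3) (Tm.var 2))))))

/-- Instances of the HF induction scheme HF3. -/
inductive IndAx : Fm → Prop
  | intro (i j k : ℕ) (A : Fm) (hjk : j ≠ k) (hj : j ∉ fvFm A) (hk : k ∉ fvFm A) :
      IndAx (FImp (FAnd (substFm i Tm.zero A)
          (FAll j (FAll k (FImp (FAnd (substFm i (Tm.var j) A) (substFm i (Tm.var k) A))
            (substFm i (Tm.eats (Tm.var j) (Tm.var k)) A)))))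
        (FAll i A))

/-- The HF calculus: `Thm H A` means `H ⊢ A`. -/
inductive Thm : Set Fm → Fm → Prop
  | hyp {H : Set Fm} {A : Fm} : A ∈ H → Thm H A
  | bool {H : Set Fm} {A : Fm} : BoolAx A → Thm H A
  | eq {H : Set Fm} {A : Fm} : EqAx A → Thm H A
  | spec {H : Set Fm} {A : Fm} : SpecAx A → Thm H A
  | hf {H : Set Fm} {A : Fm} : HFAx A → Thm H A
  | ind {H : Set Fm} {A : Fm} : IndAx A → Thm H A
  | mp {H H' : Set Fm} {A B : Fm} : Thm H (FImp A B) → Thm H' A → Thm (H ∪ H') B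
  | exE {H : Set Fm} {A B : Fm} {i : ℕ} : Thm H (FImp A B) → i ∉ fvFm B →
      (∀ C ∈ H, i ∉ fvFm C) → Thm H (FImp (FEx i A) B)

/-! Gödel coding of formulas by closed terms of the HF language. -/

/-- The set-theoretic successor `x ◁ x`. -/
def qsucc (t : Tm) : Tm := Tm.eats t t

/-- The numeral (closed term) denoting the ordinal `n`. -/
def numeral (n : ℕ) : Tm := qsucc^[n] Tm.zero

/-- An injective numeric code of terms. -/
def codeTm : Tm → ℕ
  | Tm.zero => Nat.pair 0 0
  | Tm.var i => Nat.pair 1 i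
  | Tm.bvar k => Nat.pair 2 k
  | Tm.eats a b => Nat.pair 3 (Nat.pair (codeTm a) (codeTm b))

/-- An injective numeric code of formulas. -/
def codeFm : Fm → ℕ
  | Fm.mem a b => Nat.pair 0 (Nat.pair (codeTm a) (codeTm b))
  | Fm.eq a b => Nat.pair 1 (Nat.pair (codeTm a) (codeTm b))
  | Fm.disj A B => Nat.pair 2 (Nat.pair (codeFm A) (codeFm B))
  | Fm.neg A => Nat.pair 3 (codeFm A)
  | Fm.ex A => Nat.pair 4 (codeFm A)

/-- The Gödel numeral `⌈A⌉`: a closed term coding the formula `A`. -/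
def fquot (A : Fm) : Tm := numeral (codeFm A)

namespace SecondInc

/-- Modus ponens at the empty hypothesis set. -/
lemma mp0 {A B : Fm} (h1 : Thm ∅ (FImp A B)) (h2 : Thm ∅ A) : Thm ∅ B := by
  simpa using Thm.mp h1 h2

lemma identT (A : Fm) : Thm ∅ (FImp A A) := Thm.bool (BoolAx.ident A)

/-- Cut rule on theorems. -/
lemma cutR {A B C : Fm} (h1 : Thm ∅ (Fm.disj C A)) (h2 : Thm ∅ (Fm.disj (Fm.neg C) B)) :
    Thm ∅ (Fm.disj A B) :=
  mp0 (mp0 (Thm.bool (BoolAx.disjConj A B C)) h1) h2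

lemma commR {A B : Fm} (h : Thm ∅ (Fm.disj A B)) : Thm ∅ (Fm.disj B A) :=
  cutR h (identT A)

lemma monoR {X Y Z : Fm} (h : Thm ∅ (Fm.disj X Y)) (i : Thm ∅ (FImp Y Z)) :
    Thm ∅ (Fm.disj X Z) :=
  cutR (commR h) i

lemma assocR {A B C : Fm} (h : Thm ∅ (Fm.disj A (Fm.disj B C))) :
    Thm ∅ (Fm.disj (Fm.disj A B) C) :=
  mp0 (Thm.bool (BoolAx.disjAssoc A B C)) h

lemma rot1 {X Y Z : Fm} (h : Thm ∅ (Fm.disj X (Fm.disj Y Z))) :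
    Thm ∅ (Fm.disj Z (Fm.disj X Y)) :=
  commR (assocR h)

lemma dniT (A : Fm) : Thm ∅ (FImp A (Fm.neg (Fm.neg A))) :=
  commR (identT (Fm.neg A))

lemma emT (A : Fm) : Thm ∅ (Fm.disj A (Fm.neg A)) := commR (identT A)

lemma dneT (A : Fm) : Thm ∅ (FImp (Fm.neg (Fm.neg A)) A) :=
  commR (monoR (emT A) (dniT (Fm.neg A)))

lemma contraposR {A B : Fm} (h : Thm ∅ (FImp A B)) :
    Thm ∅ (FImp (Fm.neg B) (Fm.neg A)) :=
  commR (monoR h (dniT B))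

lemma comm_imp (A B : Fm) : Thm ∅ (FImp (Fm.disj A B) (Fm.disj B A)) := by
  have w : Thm ∅ (Fm.disj (Fm.neg (Fm.disj A B))
      (Fm.disj (Fm.neg (FImp A A)) (Fm.disj B A))) :=
    Thm.bool (BoolAx.disjConj B A A)
  have w2 := rot1 (rot1 w)
  exact commR (mp0 w2 (identT A))

lemma disjI1T (A B : Fm) : Thm ∅ (FImp A (Fm.disj A B)) := Thm.bool (BoolAx.disjI1 A B)

lemma disjI2T (A B : Fm) : Thm ∅ (FImp B (Fm.disj A B)) :=
  monoR (disjI1T B A) (comm_imp B A)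

lemma transR {A B C : Fm} (h1 : Thm ∅ (FImp A B)) (h2 : Thm ∅ (FImp B C)) :
    Thm ∅ (FImp A C) :=
  monoR h1 h2

lemma andE1 {A B : Fm} (h : Thm ∅ (FAnd A B)) : Thm ∅ A :=
  mp0 (dneT A) (mp0 (contraposR (disjI1T (Fm.neg A) (Fm.neg B))) h)

lemma andE2 {A B : Fm} (h : Thm ∅ (FAnd A B)) : Thm ∅ B :=
  mp0 (dneT B) (mp0 (contraposR (disjI2T (Fm.neg A) (Fm.neg B))) h)

end SecondInc

/-- Derivation of the second incompleteness theorem from the derivability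
conditions: for a fixed point `δ` with `⊢ δ ↔ ¬Pr(⌈δ⌉)` of a provability
predicate `Pr` satisfying the Hilbert–Bernays conditions, if `⊢ ¬Pr(⌈⊥⌉)`
then `⊢ δ`; hence if `⊬ δ` (as for a consistent system, by the first
incompleteness argument) then `⊬ ¬Pr(⌈⊥⌉)`. -/
theorem second_incompleteness_from_derivability (Pr : Tm → Fm) (δ : Fm)
    (D1 : ∀ A : Fm, Thm ∅ A → Thm ∅ (Pr (fquot A)))
    (D2 : ∀ A B : Fm, Thm ∅ (FImp (Pr (fquot (FImp A B)))
      (FImp (Pr (fquot A)) (Pr (fquot B)))))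
    (D3 : ∀ A : Fm, Thm ∅ (FImp (Pr (fquot A)) (Pr (fquot (Pr (fquot A))))))
    (hδ : Thm ∅ (FIff δ (Fm.neg (Pr (fquot δ))))) :
    (Thm ∅ (Fm.neg (Pr (fquot Fls))) → Thm ∅ δ) ∧
    (¬ Thm ∅ δ → ¬ Thm ∅ (Fm.neg (Pr (fquot Fls)))) := by
  open SecondInc in
  set p : Fm := Pr (fquot δ) with hp
  set q : Fm := Pr (fquot p) with hq
  set r : Fm := Pr (fquot Fls) with hr
  have h1 : Thm ∅ (FImp δ (Fm.neg p)) := andE1 hδ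
  have h2 : Thm ∅ (FImp (Fm.neg p) δ) := andE2 hδ
  have k1 : Thm ∅ (FImp p (Pr (fquot (Fm.neg p)))) :=
    mp0 (D2 δ (Fm.neg p)) (D1 _ h1)
  have k2 : Thm ∅ (FImp p q) := D3 δ
  have taut : Thm ∅ (FImp (Fm.neg p) (FImp p Fls)) :=
    Thm.bool (BoolAx.disjI1 (Fm.neg p) Fls)
  have k3 : Thm ∅ (FImp (Pr (fquot (Fm.neg p))) (Pr (fquot (FImp p Fls)))) :=
    mp0 (D2 (Fm.neg p) (FImp p Fls)) (D1 _ taut)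
  have k4 : Thm ∅ (FImp (Pr (fquot (FImp p Fls))) (FImp q r)) := D2 p Fls
  have k5 : Thm ∅ (Fm.disj (Fm.neg p) (Fm.disj (Fm.neg q) r)) :=
    transR (transR k1 k3) k4
  have s2 : Thm ∅ (Fm.disj (Fm.neg q) (Fm.disj r (Fm.neg p))) := rot1 (rot1 k5)
  have c : Thm ∅ (Fm.disj (Fm.neg p) (Fm.disj r (Fm.neg p))) :=
    cutR (commR k2) s2
  have c2 : Thm ∅ (Fm.disj (Fm.disj (Fm.neg p) (Fm.neg p)) r) := assocR (rot1 c)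
  have k6 : Thm ∅ (FImp p r) :=
    commR (monoR (commR c2) (Thm.bool (BoolAx.disjCont (Fm.neg p))))
  have main : Thm ∅ (Fm.neg r) → Thm ∅ δ := fun hc =>
    mp0 h2 (mp0 (contraposR k6) hc)
  exact ⟨main, fun h hc => h (main hc)⟩
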